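/- Let n ≥ 2 and let 𝓛 be the map 𝓛(ρ) = Σ_{β ∈ {0,1}^{n−1}} M_β ρ M_β† with M_β = ( I_{A_1} ⊗ ⟨β|_{A_2…A_n} ⊗ X^{β_1}_{B_2} ⊗ … ⊗ X^{β_{n−1}}_{B_n} ) ( CNOT_n on A_1…A_n ⊗ I_{B_1…B_n} ). Then for EVERY operator ρ on the 2n-qubit space (in particular for arbitrarily correlated input states), ⟨GHZ_{n+1}| 𝓛(ρ) |GHZ_{n+1}⟩ = Σ_{z ∈ {0,1}^{n−1}} ⟨b_z| ρ |b_z⟩, where |b_z⟩ = |Φ^{z',0}⟩_{A_1B_1} ⊗ ⊗_{i=1}^{n−1} |Φ^{z_i,0}⟩_{A_{i+1}B_{i+1}} and z' = z_1 ⊕ … ⊕ z_{n−1}. -/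

import Mathlib

/-!
Both sides are sums of expectation values, and `∑ₜ ⟨vₜ|ρ|vₜ⟩ = tr (ρ ∑ₜ |vₜ⟩⟨vₜ|)`, so it
suffices that the two families of vectors have the same frame operator `∑ₜ |vₜ⟩⟨vₜ|`.
CNOT followed by the `X`-corrections permutes the computational basis, hence
`M_β† |GHZ⟩ = (|a, a⟩ + |ā, ā⟩)/√2`, where `a, ā` are the two strings with syndrome `β`.
On the other side `|b_z⟩` vanishes off the diagonal and equals
`2^{-n/2} (-1)^{z · syndrome a}` at `|a, a⟩`, so by orthogonality of the characters of
`(ℤ/2)^{n-1}` its frame operator is the same projector.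
-/

open Matrix

/-- Basis labels for registers `A_1, …, A_n, B_1, …, B_n` (`n = n' + 2`). -/
abbrev PairBasis (n : ℕ) : Type := (Fin n → Fin 2) × (Fin n → Fin 2)

/-- Basis labels for the output registers `A_1, B_1, …, B_n`. -/
abbrev OutBasis (n : ℕ) : Type := Fin 2 × (Fin n → Fin 2)

/-- Amplitude of `|GHZ_{n+1}⟩` on registers `A_1, B_1, …, B_n`. -/
noncomputable def ghzA1B (n : ℕ) : OutBasis (n + 2) → ℂ := fun u =>
  ((if u.1 = 0 ∧ u.2 = fun _ => 0 then 1 else 0) +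
      (if u.1 = 1 ∧ u.2 = fun _ => 1 then 1 else 0)) / (Real.sqrt 2 : ℂ)

/-- Amplitude of the Bell basis state `|Φ^{z,x}⟩ = (Z^z X^x ⊗ I)|Φ⟩` at `(u, v)`. -/
noncomputable def bellBasisAmp (z x : Fin 2) (u v : Fin 2) : ℂ :=
  if u = v + x then (-1) ^ (z.val * u.val) * ((Real.sqrt 2 : ℂ))⁻¹ else 0

/-- `CNOT_n ⊗ I_B`: `|0⟩⟨0| ⊗ I^{⊗(n-1)} + |1⟩⟨1| ⊗ X^{⊗(n-1)}` on the `A`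
registers (control `A_1`), identity on the `B` registers. -/
noncomputable def cnotA (n : ℕ) : Matrix (PairBasis (n + 2)) (PairBasis (n + 2)) ℂ :=
  Matrix.of fun p q =>
    if p.2 = q.2 ∧ p.1 0 = q.1 0 ∧ (∀ i, i ≠ 0 → p.1 i = q.1 i + q.1 0)
    then (1 : ℂ) else 0

/-- The correction operator `⊗_{i=1}^{n-1} X^{β_i}_{B_{i+1}}`. -/
noncomputable def xCorrB (n : ℕ) (β : Fin (n + 1) → Fin 2) :
    Matrix (PairBasis (n + 2)) (PairBasis (n + 2)) ℂ :=
  Matrix.of fun p q =>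
    if p.1 = q.1 ∧ (∀ j, p.2 j = q.2 j + (Fin.cons 0 β : Fin (n + 2) → Fin 2) j)
    then (1 : ℂ) else 0

/-- The Kraus operator
`M_β = (I_{A_1} ⊗ ⟨β|_{A_2 ⋯ A_n} ⊗ X^{β_1}_{B_2} ⊗ ⋯ ⊗ X^{β_{n-1}}_{B_n})(CNOT_n ⊗ I_B)`. -/
noncomputable def krausM (n : ℕ) (β : Fin (n + 1) → Fin 2) :
    Matrix (OutBasis (n + 2)) (PairBasis (n + 2)) ℂ :=
  Matrix.of fun o p => (xCorrB n β * cnotA n) ((Fin.cons o.1 β, o.2)) p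

/-- The Bell-basis product vector
`|b_z⟩ = |Φ^{z',0}⟩_{A_1 B_1} ⊗ ⊗_{i=1}^{n-1} |Φ^{z_i,0}⟩_{A_{i+1} B_{i+1}}`,
with `z' = z₁ ⊕ ⋯ ⊕ z_{n-1}`. -/
noncomputable def bVec (n : ℕ) (z : Fin (n + 1) → Fin 2) : PairBasis (n + 2) → ℂ :=
  fun p =>
    bellBasisAmp (∑ i, z i) 0 (p.1 0) (p.2 0) *
      ∏ i : Fin (n + 1), bellBasisAmp (z i) 0 (p.1 i.succ) (p.2 i.succ)

section
variable {α R : Type*} [Fintype α] [CommSemiring R] [StarRing R]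

theorem sum_star_dotProduct_mulVec_eq_trace {ι : Type*} [Fintype ι] (ρ : Matrix α α R)
    (v : ι → α → R) :
    ∑ t, star (v t) ⬝ᵥ ρ *ᵥ v t = trace (ρ * ∑ t, vecMulVec (v t) (star (v t))) := by
  simp_rw [Matrix.mul_sum, trace_sum, mul_vecMulVec, trace_vecMulVec, dotProduct_comm]

theorem star_dotProduct_mul_mul_conjTranspose_mulVec {κ : Type*} [Fintype κ]
    (A : Matrix κ α R) (ρ : Matrix α α R) (v : κ → R) :
    star v ⬝ᵥ (A * ρ * Aᴴ) *ᵥ v = star (Aᴴ *ᵥ v) ⬝ᵥ ρ *ᵥ (Aᴴ *ᵥ v) := by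
  rw [← mulVec_mulVec, ← mulVec_mulVec, dotProduct_mulVec, star_mulVec,
    conjTranspose_conjTranspose]

end

theorem fin_two_add_eq_zero_iff {a b : Fin 2} : a + b = 0 ↔ a = b := by
  revert a b; decide

/-- The eigenvalue `(-1)^{a u}` of `Z^a` on `|u⟩`. -/
def zPhase (a u : Fin 2) : ℂ := (-1) ^ (a.val * u.val)

theorem zPhase_add_left (a b u : Fin 2) : zPhase (a + b) u = zPhase a u * zPhase b u := by
  fin_cases a <;> fin_cases b <;> fin_cases u <;> norm_num [zPhase, Fin.val_add]

theorem zPhase_add_right (a u v : Fin 2) : zPhase a (u + v) = zPhase a u * zPhase a v := by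
  fin_cases a <;> fin_cases u <;> fin_cases v <;> norm_num [zPhase, Fin.val_add]

theorem zPhase_sum_left {ι : Type*} (s : Finset ι) (z : ι → Fin 2) (u : Fin 2) :
    zPhase (∑ i ∈ s, z i) u = ∏ i ∈ s, zPhase (z i) u := by
  induction s using Finset.cons_induction with
  | empty => simp [zPhase]
  | cons i s hi ih => rw [Finset.sum_cons, Finset.prod_cons, zPhase_add_left, ih]

theorem conj_zPhase (a u : Fin 2) : starRingEnd ℂ (zPhase a u) = zPhase a u := by
  simp [zPhase]

theorem sum_zPhase (u : Fin 2) : ∑ a, zPhase a u = if u = 0 then 2 else 0 := by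
  fin_cases u <;> norm_num [zPhase]

theorem sum_prod_zPhase_mul_zPhase {ι : Type*} [Fintype ι] [DecidableEq ι] (u v : ι → Fin 2) :
    ∑ z : ι → Fin 2, ∏ i, zPhase (z i) (u i) * zPhase (z i) (v i) =
      if u = v then 2 ^ Fintype.card ι else 0 := by
  have hsum (i : ι) : ∑ a, zPhase a (u i) * zPhase a (v i) = if u i = v i then 2 else 0 := by
    simp_rw [← zPhase_add_right, sum_zPhase, fin_two_add_eq_zero_iff]
  rw [← Fintype.prod_sum (fun i a => zPhase a (u i) * zPhase a (v i)),
    Fintype.prod_congr _ _ hsum, Fintype.prod_ite_zero]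
  simp [funext_iff]

/-- The outcome `β` read off `A_2, …, A_n` after `CNOT_n` acts on `|a⟩`. -/
def syndrome {n : ℕ} (a : Fin (n + 1) → Fin 2) : Fin n → Fin 2 := fun i => a i.succ + a 0

theorem cnotA_apply (n : ℕ) (p q : PairBasis (n + 2)) :
    cnotA n p q = if p = (Fin.cons (q.1 0) (syndrome q.1), q.2) then 1 else 0 := by
  refine if_congr ?_ rfl rfl
  simp only [Prod.ext_iff, funext_iff (f := p.1), Fin.forall_fin_succ, Fin.cons_zero,
    Fin.cons_succ, syndrome, ne_eq, not_true, false_imp_iff, Fin.succ_ne_zero, not_false_iff,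
    true_imp_iff, true_and]
  tauto

theorem xCorrB_apply (n : ℕ) (β : Fin (n + 1) → Fin 2) (p q : PairBasis (n + 2)) :
    xCorrB n β p q = if p = (q.1, q.2 + Fin.cons 0 β) then 1 else 0 := by
  refine if_congr ?_ rfl rfl
  simp [Prod.ext_iff, funext_iff]

theorem krausM_apply (n : ℕ) (β : Fin (n + 1) → Fin 2) (o : OutBasis (n + 2))
    (p : PairBasis (n + 2)) :
    krausM n β o p = if o = (p.1 0, p.2 + Fin.cons 0 β) ∧ β = syndrome p.1 then 1 else 0 := by
  simp only [krausM, of_apply, mul_apply, xCorrB_apply, cnotA_apply, mul_ite, mul_one, mul_zero,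
    Finset.sum_ite_eq', Finset.mem_univ, if_true]
  refine if_congr ?_ rfl rfl
  simp only [Prod.ext_iff, Fin.cons_inj]
  tauto

theorem ghzA1B_apply (n : ℕ) (a : Fin 2) (w : Fin (n + 2) → Fin 2) :
    ghzA1B n (a, w) = if w = fun _ => a then (Real.sqrt 2 : ℂ)⁻¹ else 0 := by
  fin_cases a <;> simp [ghzA1B, div_eq_mul_inv]

theorem cons_zero_syndrome {n : ℕ} (a : Fin (n + 1) → Fin 2) :
    (Fin.cons 0 (syndrome a) : Fin (n + 1) → Fin 2) = a + fun _ => a 0 := by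
  ext i : 1
  induction i using Fin.cases with
  | zero => exact (fin_two_add_eq_zero_iff.mpr rfl).symm
  | succ i => rfl

theorem add_cons_zero_syndrome_eq_const_iff {n : ℕ} (a b : Fin (n + 1) → Fin 2) :
    (b + Fin.cons 0 (syndrome a) = fun _ => a 0) ↔ a = b := by
  have key : ∀ x y c : Fin 2, y + (x + c) = c ↔ x = y := by decide
  simp only [cons_zero_syndrome, funext_iff, Pi.add_apply, key]

theorem conjTranspose_krausM_mulVec_ghzA1B (n : ℕ) (β : Fin (n + 1) → Fin 2) :
    (krausM n β)ᴴ *ᵥ ghzA1B n =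
      fun p => if β = syndrome p.1 ∧ p.1 = p.2 then (Real.sqrt 2 : ℂ)⁻¹ else 0 := by
  ext p
  by_cases hβ : β = syndrome p.1
  · simp [mulVec, dotProduct, krausM_apply, hβ, ghzA1B_apply,
      add_cons_zero_syndrome_eq_const_iff]
  · simp [mulVec, dotProduct, krausM_apply, hβ]

theorem bellBasisAmp_zero_right (z u v : Fin 2) :
    bellBasisAmp z 0 u v = if u = v then zPhase z u * (Real.sqrt 2 : ℂ)⁻¹ else 0 := by
  simp [bellBasisAmp, zPhase]

theorem bVec_apply (n : ℕ) (z : Fin (n + 1) → Fin 2) (p : PairBasis (n + 2)) :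
    bVec n z p = if p.1 = p.2
      then (Real.sqrt 2 : ℂ)⁻¹ ^ (n + 2) * ∏ i, zPhase (z i) (syndrome p.1 i) else 0 := by
  have hprod : bVec n z p =
      ∏ j, bellBasisAmp ((Fin.cons (∑ i, z i) z : Fin (n + 2) → Fin 2) j) 0 (p.1 j) (p.2 j) := by
    rw [Fin.prod_univ_succ]; rfl
  simp only [hprod, bellBasisAmp_zero_right, Fintype.prod_ite_zero, ← funext_iff]
  refine if_congr Iff.rfl ?_ rfl
  simp only [Finset.prod_mul_distrib, Finset.prod_const, Finset.card_univ, Fintype.card_fin,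
    Fin.prod_univ_succ (n := n + 1), Fin.cons_zero, Fin.cons_succ, syndrome, zPhase_add_right,
    zPhase_sum_left]
  ring

/-- The projector onto the span of the states `(|a, a⟩ + |ā, ā⟩)/√2`, where `ā` is the
complement of `a`: `syndrome a = syndrome b` iff `b ∈ {a, ā}`. -/
noncomputable def flipPairProjector (n : ℕ) : Matrix (PairBasis (n + 2)) (PairBasis (n + 2)) ℂ :=
  of fun p q => if p.1 = p.2 ∧ q.1 = q.2 ∧ syndrome p.1 = syndrome q.1 then 2⁻¹ else 0

theorem inv_sqrt_two_mul_self : (Real.sqrt 2 : ℂ)⁻¹ * (Real.sqrt 2 : ℂ)⁻¹ = 2⁻¹ := by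
  rw [← mul_inv, ← Complex.ofReal_mul, Real.mul_self_sqrt zero_le_two, Complex.ofReal_ofNat]

theorem sum_vecMulVec_conjTranspose_krausM_mulVec_ghzA1B (n : ℕ) :
    ∑ β, vecMulVec ((krausM n β)ᴴ *ᵥ ghzA1B n) (star ((krausM n β)ᴴ *ᵥ ghzA1B n)) =
      flipPairProjector n := by
  ext p q
  by_cases hpq : p.1 = p.2 ∧ q.1 = q.2
  · obtain ⟨hp, hq⟩ := hpq
    simp only [conjTranspose_krausM_mulVec_ghzA1B, Matrix.sum_apply, vecMulVec_apply, hp, hq,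
      and_true, true_and, Pi.star_apply, ite_mul, zero_mul, Finset.sum_ite_eq', Finset.mem_univ,
      if_true, flipPairProjector, of_apply]
    split_ifs <;> simp [Complex.conj_ofReal, inv_sqrt_two_mul_self]
  · rcases not_and_or.mp hpq with h | h <;>
      simp [Matrix.sum_apply, vecMulVec_apply, conjTranspose_krausM_mulVec_ghzA1B,
        flipPairProjector, h]

theorem sum_vecMulVec_bVec (n : ℕ) :
    ∑ z, vecMulVec (bVec n z) (star (bVec n z)) = flipPairProjector n := by
  ext p q
  by_cases hpq : p.1 = p.2 ∧ q.1 = q.2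
  · obtain ⟨hp, hq⟩ := hpq
    simp only [Matrix.sum_apply, vecMulVec_apply, bVec_apply, hp, hq, if_true, Pi.star_apply,
      star_mul', star_pow, star_prod, RCLike.star_def, Complex.conj_ofReal, map_inv₀, conj_zPhase,
      flipPairProjector, of_apply, true_and]
    simp only [mul_mul_mul_comm _ (∏ _, _), ← mul_pow, inv_sqrt_two_mul_self,
      ← Finset.prod_mul_distrib, ← Finset.mul_sum, sum_prod_zPhase_mul_zPhase, Fintype.card_fin]
    split_ifs
    · rw [pow_succ _ (n + 1), mul_right_comm, ← mul_pow, inv_mul_cancel₀ two_ne_zero, one_pow,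
        one_mul]
    · rw [mul_zero]
  · rcases not_and_or.mp hpq with h | h <;>
      simp [Matrix.sum_apply, vecMulVec_apply, bVec_apply, flipPairProjector, h]

/-- **Fidelity formula for Protocol 2 with arbitrarily correlated inputs.**
For every operator `ρ` on the `2n`-qubit space (`n = n' + 2`),
`⟨GHZ_{n+1}| ∑_β M_β ρ M_β† |GHZ_{n+1}⟩ = ∑_{z ∈ {0,1}^{n-1}} ⟨b_z| ρ |b_z⟩`. -/
theorem fidelity_protocol2_general (n : ℕ)
    (ρ : Matrix (PairBasis (n + 2)) (PairBasis (n + 2)) ℂ) :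
    star (ghzA1B n) ⬝ᵥ
        (∑ β : Fin (n + 1) → Fin 2, krausM n β * ρ * (krausM n β)ᴴ).mulVec (ghzA1B n)
      = ∑ z : Fin (n + 1) → Fin 2, star (bVec n z) ⬝ᵥ ρ.mulVec (bVec n z) := by
  calc star (ghzA1B n) ⬝ᵥ (∑ β, krausM n β * ρ * (krausM n β)ᴴ) *ᵥ ghzA1B n
      = ∑ β, star ((krausM n β)ᴴ *ᵥ ghzA1B n) ⬝ᵥ ρ *ᵥ ((krausM n β)ᴴ *ᵥ ghzA1B n) := by
        simp_rw [sum_mulVec, dotProduct_sum, star_dotProduct_mul_mul_conjTranspose_mulVec]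
    _ = trace (ρ * flipPairProjector n) := by
        rw [sum_star_dotProduct_mulVec_eq_trace, sum_vecMulVec_conjTranspose_krausM_mulVec_ghzA1B]
    _ = ∑ z, star (bVec n z) ⬝ᵥ ρ *ᵥ bVec n z := by
        rw [sum_star_dotProduct_mulVec_eq_trace, sum_vecMulVec_bVec]
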